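/- (Uniqueness part of topological equivalence conjugacy) Suppose G̃ satisfies |G̃(t,s)| ≤ Kρ* e^{-α|t-s|}, f satisfies the Lipschitz bound with constants ℓ₁, ℓ₂, and 2(ℓ₁+ℓ₂)Kρ*/α < 1. If J : ℝ → ℝⁿ and x : ℝ → ℝⁿ are continuous with J − x bounded, and J(t) − x(t) = ∫_ℝ G̃(t,s)[ f(s, J(s), J(γ(s))) − f(s, x(s), x(γ(s))) ] ds for all t, then J(t) = x(t) for all t. -/

import Mathlib

/-! The kernel has `L¹`-norm at most `2Kρ/α` in `s`, uniformly in `t`, and the right-hand side is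
`(ℓ₁ + ℓ₂)`-Lipschitz for the sup norm, so `sup ‖J - x‖ ≤ q · sup ‖J - x‖` with
`q = 2(ℓ₁ + ℓ₂)Kρ/α < 1`; boundedness makes the supremum finite, hence zero. -/

open MeasureTheory

theorem integral_exp_neg_mul_abs {α : ℝ} (hα : 0 < α) :
    ∫ u : ℝ, Real.exp (-α * |u|) = 2 / α := by
  rw [integral_comp_abs (f := fun u => Real.exp (-α * u)),
    integral_exp_mul_Ioi (neg_lt_zero.2 hα)]
  field_simp
  simp

theorem integral_exp_neg_mul_abs_sub {α : ℝ} (hα : 0 < α) (t : ℝ) :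
    ∫ s : ℝ, Real.exp (-α * |t - s|) = 2 / α := by
  rw [integral_sub_left_eq_self (fun u => Real.exp (-α * |u|)) volume t,
    integral_exp_neg_mul_abs hα]

theorem integrable_exp_neg_mul_abs_sub {α : ℝ} (hα : 0 < α) (t : ℝ) :
    Integrable (fun s : ℝ => Real.exp (-α * |t - s|)) :=
  .of_integral_ne_zero (by rw [integral_exp_neg_mul_abs_sub hα]; positivity)

theorem norm_integral_apply_le_of_exp_decay {E F : Type*} [NormedAddCommGroup E]
    [NormedSpace ℝ E] [NormedAddCommGroup F] [NormedSpace ℝ F]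
    {A : ℝ → E →L[ℝ] F} {h : ℝ → E} {C α B t : ℝ} (hα : 0 < α)
    (hA : ∀ s, ‖A s‖ ≤ C * Real.exp (-α * |t - s|)) (hh : ∀ s, ‖h s‖ ≤ B) :
    ‖∫ s, A s (h s)‖ ≤ 2 * C * B / α := by
  have hB : 0 ≤ B := (norm_nonneg _).trans (hh 0)
  have hpointwise : ∀ s, ‖A s (h s)‖ ≤ C * B * Real.exp (-α * |t - s|) := fun s =>
    calc ‖A s (h s)‖ ≤ ‖A s‖ * ‖h s‖ := (A s).le_opNorm _
      _ ≤ C * Real.exp (-α * |t - s|) * B :=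
        mul_le_mul (hA s) (hh s) (norm_nonneg _) ((norm_nonneg _).trans (hA s))
      _ = C * B * Real.exp (-α * |t - s|) := by ring
  calc ‖∫ s, A s (h s)‖ ≤ ∫ s, C * B * Real.exp (-α * |t - s|) :=
        norm_integral_le_of_norm_le ((integrable_exp_neg_mul_abs_sub hα t).const_mul _)
          (.of_forall hpointwise)
    _ = 2 * C * B / α := by
      rw [integral_const_mul, integral_exp_neg_mul_abs_sub hα]
      ring

theorem eq_zero_of_norm_le_mul_of_bounded {ι E : Type*} [NormedAddCommGroup E] {g : ι → E}
    {q : ℝ} (hq : q < 1) (hbdd : ∃ C, ∀ i, ‖g i‖ ≤ C)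
    (hself : ∀ M, (∀ i, ‖g i‖ ≤ M) → ∀ i, ‖g i‖ ≤ q * M) : g = 0 := by
  rcases isEmpty_or_nonempty ι with hι | hι
  · exact funext fun i => isEmptyElim i
  obtain ⟨C, hC⟩ := hbdd
  have hsup : ∀ i, ‖g i‖ ≤ ⨆ j, ‖g j‖ := le_ciSup ⟨C, Set.forall_mem_range.2 hC⟩
  have hM0 : 0 ≤ ⨆ j, ‖g j‖ := Real.iSup_nonneg fun j => norm_nonneg _
  have hMq : ⨆ j, ‖g j‖ ≤ q * ⨆ j, ‖g j‖ := ciSup_le (hself _ hsup)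
  have hM : ⨆ j, ‖g j‖ ≤ 0 := by nlinarith
  exact funext fun i => norm_le_zero_iff.1 ((hsup i).trans hM)

theorem stmt10_general {n : ℕ}
    (G : ℝ → ℝ → ((Fin n → ℝ) →L[ℝ] (Fin n → ℝ)))
    (f : ℝ → (Fin n → ℝ) → (Fin n → ℝ) → (Fin n → ℝ))
    (γ : ℝ → ℝ) (J x : ℝ → (Fin n → ℝ))
    (K ρ α ℓ₁ ℓ₂ : ℝ) (hα : 0 < α)
    (hℓ₁ : 0 < ℓ₁) (hℓ₂ : 0 < ℓ₂)
    (hG : ∀ t s : ℝ, ‖G t s‖ ≤ K * ρ * Real.exp (-α * |t - s|))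
    (hfl : ∀ (s : ℝ) (a a' b b' : Fin n → ℝ),
      ‖f s a b - f s a' b'‖ ≤ ℓ₁ * ‖a - a'‖ + ℓ₂ * ‖b - b'‖)
    (hcond : 2 * (ℓ₁ + ℓ₂) * K * ρ / α < 1)
    (hbdd : ∃ C : ℝ, ∀ t : ℝ, ‖J t - x t‖ ≤ C)
    (heq : ∀ t : ℝ, J t - x t = ∫ s : ℝ,
      (G t s) (f s (J s) (J (γ s)) - f s (x s) (x (γ s)))) :
    ∀ t : ℝ, J t = x t := by
  have hlip : ∀ M, (∀ t, ‖J t - x t‖ ≤ M) →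
      ∀ s, ‖f s (J s) (J (γ s)) - f s (x s) (x (γ s))‖ ≤ (ℓ₁ + ℓ₂) * M := fun M hM s =>
    (hfl s _ _ _ _).trans <| by
      linarith [mul_le_mul_of_nonneg_left (hM s) hℓ₁.le,
        mul_le_mul_of_nonneg_left (hM (γ s)) hℓ₂.le]
  have hzero : (fun t => J t - x t) = 0 :=
    eq_zero_of_norm_le_mul_of_bounded hcond hbdd fun M hM t => by
      rw [heq t]
      calc _ ≤ 2 * (K * ρ) * ((ℓ₁ + ℓ₂) * M) / α :=
            norm_integral_apply_le_of_exp_decay hα (hG t) (hlip M hM)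
        _ = 2 * (ℓ₁ + ℓ₂) * K * ρ / α * M := by ring
  exact fun t => sub_eq_zero.1 (congrFun hzero t)

theorem stmt10 {n : ℕ}
    (G : ℝ → ℝ → ((Fin n → ℝ) →L[ℝ] (Fin n → ℝ)))
    (f : ℝ → (Fin n → ℝ) → (Fin n → ℝ) → (Fin n → ℝ))
    (γ : ℝ → ℝ) (J x : ℝ → (Fin n → ℝ))
    (K ρ α ℓ₁ ℓ₂ : ℝ) (hK : 1 ≤ K) (hρ : 1 ≤ ρ) (hα : 0 < α)
    (hℓ₁ : 0 < ℓ₁) (hℓ₂ : 0 < ℓ₂)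
    (hG : ∀ t s : ℝ, ‖G t s‖ ≤ K * ρ * Real.exp (-α * |t - s|))
    (hfl : ∀ (s : ℝ) (a a' b b' : Fin n → ℝ),
      ‖f s a b - f s a' b'‖ ≤ ℓ₁ * ‖a - a'‖ + ℓ₂ * ‖b - b'‖)
    (hcond : 2 * (ℓ₁ + ℓ₂) * K * ρ / α < 1)
    (hJ : Continuous J) (hx : Continuous x)
    (hbdd : ∃ C : ℝ, ∀ t : ℝ, ‖J t - x t‖ ≤ C)
    (hint : ∀ t : ℝ, Integrable (fun s =>
      (G t s) (f s (J s) (J (γ s)) - f s (x s) (x (γ s)))) volume)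
    (heq : ∀ t : ℝ, J t - x t = ∫ s : ℝ,
      (G t s) (f s (J s) (J (γ s)) - f s (x s) (x (γ s)))) :
    ∀ t : ℝ, J t = x t :=
  stmt10_general G f γ J x K ρ α ℓ₁ ℓ₂ hα hℓ₁ hℓ₂ hG hfl hcond hbdd heq
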